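/- arXiv:2304.04586 — 6 statements merged into one kernel-verified Lean document; each statement's English description precedes it below -/
import Mathlib

section
/- Let $T_n(x) = \frac{a_0}{2} + \sum_{k=1}^n (a_k \cos kx + b_k \sin kx)$ be a real trigonometric polynomial of degree at most $n$ whose leading coefficient pair $(a_n,b_n)$ is nonzero. Then $\sqrt{a_n^2 + b_n^2} \le \max_t |T_n(t)|$. -/
/-!
Write the top harmonic as `a n cos (n x) + b n sin (n x) = R cos (n x - φ)` with
`R = √(a n ^ 2 + b n ^ 2)`, and sample `T` at the `2n` points `x_j = (φ + jπ)/n`, where this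
harmonic equals `(-1)^j R`. In the alternating sum `∑ (-1)^j T(x_j)` every lower harmonic
`k < n` (and the constant term) cancels, because it becomes a geometric sum whose ratio
`-exp(ikπ/n)` is a nontrivial `2n`-th root of unity. Hence `2nR = ∑ (-1)^j T(x_j) ≤ 2n max |T|`.
-/

open Real Finset
open Complex (I)

noncomputable def trigPoly (n : ℕ) (a0 : ℝ) (a b : ℕ → ℝ) (x : ℝ) : ℝ :=
  a0 / 2 + ∑ k ∈ Icc 1 n, (a k * cos (k * x) + b k * sin (k * x))

theorem abs_trigPoly_le (n : ℕ) (a0 : ℝ) (a b : ℕ → ℝ) (x : ℝ) :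
    |trigPoly n a0 a b x| ≤ |a0| / 2 + ∑ k ∈ Icc 1 n, (|a k| + |b k|) := by
  have harmonic_le (k : ℕ) : |a k * cos (k * x) + b k * sin (k * x)| ≤ |a k| + |b k| := by
    refine (abs_add_le _ _).trans ?_
    rw [abs_mul, abs_mul]
    gcongr
    · exact mul_le_of_le_one_right (abs_nonneg _) (abs_cos_le_one _)
    · exact mul_le_of_le_one_right (abs_nonneg _) (abs_sin_le_one _)
  calc |trigPoly n a0 a b x|
      ≤ |a0 / 2| + ∑ k ∈ Icc 1 n, |a k * cos (k * x) + b k * sin (k * x)| :=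
        (abs_add_le _ _).trans (by gcongr; exact abs_sum_le_sum_abs _ _)
    _ ≤ |a0| / 2 + ∑ k ∈ Icc 1 n, (|a k| + |b k|) := by
        rw [abs_div, abs_two]
        gcongr with k
        exact harmonic_le k

theorem bddAbove_range_abs_trigPoly (n : ℕ) (a0 : ℝ) (a b : ℕ → ℝ) :
    BddAbove (Set.range fun x => |trigPoly n a0 a b x|) :=
  ⟨_, Set.forall_mem_range.2 (abs_trigPoly_le n a0 a b)⟩

theorem exists_eq_sqrt_mul_cos_and_eq_sqrt_mul_sin (a b : ℝ) :
    ∃ φ, a = √(a ^ 2 + b ^ 2) * cos φ ∧ b = √(a ^ 2 + b ^ 2) * sin φ := by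
  have hnorm : ‖(⟨a, b⟩ : ℂ)‖ = √(a ^ 2 + b ^ 2) := Complex.norm_eq_sqrt_sq_add_sq _
  exact ⟨Complex.arg ⟨a, b⟩, by rw [← hnorm, Complex.norm_mul_cos_arg],
    by rw [← hnorm, Complex.norm_mul_sin_arg]⟩

theorem sum_range_neg_one_pow_mul_exp_eq_zero {N : ℕ} (hN : Even N) {θ : ℝ}
    (hθ : Complex.exp (θ * I) ≠ -1) (hθN : Complex.exp (θ * I) ^ N = 1) (α : ℝ) :
    ∑ j ∈ range N, (((-1) ^ j : ℝ) : ℂ) * Complex.exp ((α + j * θ : ℝ) * I) = 0 := by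
  have hw : -Complex.exp (θ * I) ≠ 1 := fun h => hθ (by linear_combination -h)
  have hwN : (-Complex.exp (θ * I)) ^ N = 1 := by rw [neg_pow, hN.neg_one_pow, one_mul, hθN]
  have hterm (j : ℕ) : (((-1) ^ j : ℝ) : ℂ) * Complex.exp ((α + j * θ : ℝ) * I)
      = Complex.exp (α * I) * (-Complex.exp (θ * I)) ^ j := by
    push_cast
    rw [neg_pow (Complex.exp _), ← Complex.exp_nat_mul, mul_left_comm, ← Complex.exp_add]
    ring_nf
  rw [sum_congr rfl fun j _ => hterm j, ← mul_sum, geom_sum_eq hw, hwN, sub_self, zero_div,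
    mul_zero]

theorem sum_range_neg_one_pow_mul_harmonic_eq_zero {N : ℕ} (hN : Even N) {θ : ℝ}
    (hθ : Complex.exp (θ * I) ≠ -1) (hθN : Complex.exp (θ * I) ^ N = 1) (A B α : ℝ) :
    ∑ j ∈ range N, (-1 : ℝ) ^ j * (A * cos (α + j * θ) + B * sin (α + j * θ)) = 0 := by
  have hexp := sum_range_neg_one_pow_mul_exp_eq_zero hN hθ hθN α
  have hcos : ∑ j ∈ range N, (-1 : ℝ) ^ j * cos (α + j * θ) = 0 := by
    simpa only [Complex.re_sum, Complex.re_ofReal_mul, Complex.exp_ofReal_mul_I_re,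
      Complex.zero_re] using congrArg Complex.re hexp
  have hsin : ∑ j ∈ range N, (-1 : ℝ) ^ j * sin (α + j * θ) = 0 := by
    simpa only [Complex.im_sum, Complex.im_ofReal_mul, Complex.exp_ofReal_mul_I_im,
      Complex.zero_im] using congrArg Complex.im hexp
  calc ∑ j ∈ range N, (-1 : ℝ) ^ j * (A * cos (α + j * θ) + B * sin (α + j * θ))
      = A * ∑ j ∈ range N, (-1 : ℝ) ^ j * cos (α + j * θ)
        + B * ∑ j ∈ range N, (-1 : ℝ) ^ j * sin (α + j * θ) := by
        rw [mul_sum, mul_sum, ← sum_add_distrib]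
        exact sum_congr rfl fun j _ => by ring
    _ = 0 := by rw [hcos, hsin]; ring

theorem sum_range_two_mul_neg_one_pow_mul_harmonic_of_lt {n k : ℕ} (hk : k < n) (A B φ : ℝ) :
    ∑ j ∈ range (2 * n), (-1 : ℝ) ^ j *
      (A * cos (k * ((φ + j * π) / n)) + B * sin (k * ((φ + j * π) / n))) = 0 := by
  have hn : (0 : ℝ) < n := by exact_mod_cast k.zero_le.trans_lt hk
  have hkn : (k : ℝ) < n := by exact_mod_cast hk
  have hangle (j : ℕ) : k * ((φ + j * π) / n) = k * φ / n + j * (k * π / n) := by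
    field_simp
  simp only [hangle]
  apply sum_range_neg_one_pow_mul_harmonic_eq_zero (even_two_mul n)
  · intro h
    have hcos : cos (k * π / n) = -1 := by
      simpa only [Complex.exp_ofReal_mul_I_re, Complex.neg_re, Complex.one_re]
        using congrArg Complex.re h
    have : cos π < cos (k * π / n) :=
      cos_lt_cos_of_nonneg_of_le_pi (by positivity) le_rfl
        (by rw [div_lt_iff₀ hn]; nlinarith [pi_pos])
    rw [cos_pi, hcos] at this
    exact lt_irrefl _ this
  · rw [← Complex.exp_nat_mul, ← Complex.exp_nat_mul_two_pi_mul_I k]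
    congr 1
    have : (n : ℂ) ≠ 0 := by exact_mod_cast hn.ne'
    push_cast
    field_simp

theorem sum_range_two_mul_neg_one_pow_mul_harmonic_self {n : ℕ} (hn : n ≠ 0) (A B φ : ℝ) :
    ∑ j ∈ range (2 * n), (-1 : ℝ) ^ j *
      (A * cos (n * ((φ + j * π) / n)) + B * sin (n * ((φ + j * π) / n)))
      = 2 * n * (A * cos φ + B * sin φ) := by
  have hangle (j : ℕ) : n * ((φ + j * π) / n) = φ + j * π := by
    field_simp
  have hterm (j : ℕ) : (-1 : ℝ) ^ j * (A * ((-1) ^ j * cos φ) + B * ((-1) ^ j * sin φ))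
      = A * cos φ + B * sin φ := by
    have hsq : (-1 : ℝ) ^ j * (-1) ^ j = 1 := by rw [← mul_pow]; norm_num
    linear_combination (A * cos φ + B * sin φ) * hsq
  simp only [hangle, cos_add_nat_mul_pi, sin_add_nat_mul_pi, hterm, sum_const, card_range,
    nsmul_eq_mul]
  push_cast
  ring

theorem sum_range_two_mul_neg_one_pow_mul_trigPoly {n : ℕ} (hn : n ≠ 0) (a0 : ℝ)
    (a b : ℕ → ℝ) (φ : ℝ) :
    ∑ j ∈ range (2 * n), (-1 : ℝ) ^ j * trigPoly n a0 a b ((φ + j * π) / n)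
      = 2 * n * (a n * cos φ + b n * sin φ) := by
  simp_rw [trigPoly, mul_add (_ ^ _) (a0 / 2), mul_sum (s := Icc 1 n)]
  rw [sum_add_distrib, ← sum_mul, neg_one_geom_sum, if_pos (even_two_mul n), zero_mul, zero_add,
    sum_comm, sum_eq_single_of_mem n (mem_Icc.2 ⟨Nat.one_le_iff_ne_zero.2 hn, le_rfl⟩)]
  · exact sum_range_two_mul_neg_one_pow_mul_harmonic_self hn _ _ φ
  · intro k hk hkn
    exact sum_range_two_mul_neg_one_pow_mul_harmonic_of_lt
      ((mem_Icc.1 hk).2.lt_of_ne hkn) _ _ φ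

theorem leading_coeff_bound_general (n : ℕ) (hn : 1 ≤ n) (a b : ℕ → ℝ) (a0 : ℝ) (T : ℝ → ℝ)
    (hT : ∀ x, T x = a0 / 2 + ∑ k ∈ Finset.Icc 1 n,
      (a k * Real.cos (k * x) + b k * Real.sin (k * x))) :
    Real.sqrt (a n ^ 2 + b n ^ 2) ≤ ⨆ t : ℝ, |T t| := by
  obtain rfl : T = trigPoly n a0 a b := funext hT
  obtain ⟨φ, ha, hb⟩ := exists_eq_sqrt_mul_cos_and_eq_sqrt_mul_sin (a n) (b n)
  set R := √(a n ^ 2 + b n ^ 2)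
  set M := ⨆ t, |trigPoly n a0 a b t|
  have hn0 : n ≠ 0 := Nat.one_le_iff_ne_zero.1 hn
  have hpos : (0 : ℝ) < 2 * n := by positivity
  have hR : a n * cos φ + b n * sin φ = R := by
    linear_combination cos φ * ha + sin φ * hb + R * sin_sq_add_cos_sq φ
  refine le_of_mul_le_mul_left ?_ hpos
  calc 2 * n * R = 2 * n * (a n * cos φ + b n * sin φ) := by rw [hR]
    _ = ∑ j ∈ range (2 * n), (-1 : ℝ) ^ j * trigPoly n a0 a b ((φ + j * π) / n) :=
        (sum_range_two_mul_neg_one_pow_mul_trigPoly hn0 a0 a b φ).symm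
    _ ≤ ∑ j ∈ range (2 * n), M := by
        refine sum_le_sum fun j _ => ?_
        calc (-1 : ℝ) ^ j * trigPoly n a0 a b ((φ + j * π) / n)
            ≤ |trigPoly n a0 a b ((φ + j * π) / n)| :=
              (le_abs_self _).trans_eq (by simp [abs_mul])
          _ ≤ M := le_ciSup (bddAbove_range_abs_trigPoly n a0 a b) _
    _ = 2 * n * M := by simp

theorem leading_coeff_bound (n : ℕ) (hn : 1 ≤ n) (a b : ℕ → ℝ) (a0 : ℝ) (T : ℝ → ℝ)
    (hT : ∀ x, T x = a0 / 2 + ∑ k ∈ Finset.Icc 1 n,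
      (a k * Real.cos (k * x) + b k * Real.sin (k * x)))
    (hne : (a n, b n) ≠ (0, 0)) :
    Real.sqrt (a n ^ 2 + b n ^ 2) ≤ ⨆ t : ℝ, |T t| :=
  leading_coeff_bound_general n hn a b a0 T hT
end

section
/- For every real $r > 0$ and every positive integer $n$ with $2r \ge n+1$, one has $\sum_{k=n+1}^{\infty} \frac{1}{k^{2r}} \le \frac{1}{n^{2r}} \cdot \frac{2 + \frac{1}{n}}{(1 + \frac{1}{n})^{2r}}$. -/
open Real

open MeasureTheory Set in
theorem tail_power_sum_bound (r : ℝ) (hr : 0 < r) (n : ℕ) (hn : 0 < n)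
    (h : (n : ℝ) + 1 ≤ 2 * r) :
    ∑' k : ℕ, 1 / ((n : ℝ) + 1 + k) ^ (2 * r) ≤
      1 / (n : ℝ) ^ (2 * r) * ((2 + 1 / n) / (1 + 1 / n) ^ (2 * r)) := by
  set p := 2 * r with hp
  have hn1 : (1 : ℝ) ≤ n := by exact_mod_cast hn
  have hn0 : (0 : ℝ) < n := by linarith
  have hp2 : (2 : ℝ) ≤ p := by linarith
  have hp1 : (1 : ℝ) < p := by linarith
  set c : ℝ := (n : ℝ) + 1 with hcdef
  have hc : (0:ℝ) < c := by positivity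
  have hneg : -p < -1 := by linarith
  -- summability
  have hsum : Summable (fun k : ℕ => (c + k) ^ (-p)) := by
    have := (summable_nat_add_iff (f := fun k : ℕ => 1 / (k:ℝ) ^ p) (n+1)).2
      (Real.summable_one_div_nat_rpow.mpr hp1)
    refine this.congr fun k => ?_
    have hk : (0:ℝ) < c + k := by positivity
    rw [Real.rpow_neg hk.le, ← one_div]
    push_cast
    ring_nf
    rw [hcdef]; ring_nf
  -- antitonicity
  have hanti : ∀ s : Set ℝ, s ⊆ Ioi (0:ℝ) → AntitoneOn (fun t : ℝ => t ^ (-p)) s := by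
    intro s hs x hx y hy hxy
    have hx0 : (0:ℝ) < x := hs hx
    simp only
    rw [Real.rpow_neg hx0.le, Real.rpow_neg (hx0.trans_le hxy).le]
    exact inv_anti₀ (Real.rpow_pos_of_pos hx0 p)
      (Real.rpow_le_rpow hx0.le hxy (by linarith))
  have hInt : IntegrableOn (fun t:ℝ => t ^ (-p)) (Ioi c) := integrableOn_Ioi_rpow_of_lt hneg hc
  have hI : ∫ t in Ioi c, t ^ (-p) = c ^ (-p+1) / (p-1) := by
    rw [integral_Ioi_rpow_of_lt hneg hc]
    rw [show -p + 1 = -(p-1) by ring] at *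
    rw [neg_div, ← div_neg, neg_neg]
  -- tail bound by integral
  have htail : ∑' k : ℕ, (c + ((k:ℝ)+1)) ^ (-p) ≤ c ^ (-p+1) / (p-1) := by
    rw [← hI]
    have hsum' : Summable (fun k : ℕ => (c + ((k:ℝ)+1)) ^ (-p)) := by
      refine ((summable_nat_add_iff 1).2 hsum).congr fun k => ?_
      push_cast; ring_nf
    refine Summable.tsum_le_of_sum_range_le hsum' fun N => ?_
    have hmono := AntitoneOn.sum_le_integral (f := fun t : ℝ => t ^ (-p)) (x₀ := c) (a := N)
      (hanti _ (fun x hx => lt_of_lt_of_le hc hx.1))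
    calc ∑ i ∈ Finset.range N, (c + ((i:ℝ)+1)) ^ (-p)
        = ∑ i ∈ Finset.range N, (fun t : ℝ => t ^ (-p)) (c + ((i+1 : ℕ):ℝ)) := by
          refine Finset.sum_congr rfl fun i _ => ?_; push_cast; ring_nf
      _ ≤ ∫ x in c..c + N, x ^ (-p) := hmono
      _ ≤ ∫ t in Ioi c, t ^ (-p) := by
          rw [intervalIntegral.integral_of_le (le_add_of_nonneg_right (Nat.cast_nonneg N))]
          refine setIntegral_mono_set hInt ?_ (HasSubset.Subset.eventuallyLE Ioc_subset_Ioi_self)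
          filter_upwards [ae_restrict_mem measurableSet_Ioi] with x hx
          exact Real.rpow_nonneg (le_of_lt (hc.trans hx)) _
  -- split off first term
  have hsplit : ∑' k : ℕ, 1 / ((n : ℝ) + 1 + k) ^ p
      = c ^ (-p) + ∑' k : ℕ, (c + ((k:ℝ)+1)) ^ (-p) := by
    have e : ∀ k : ℕ, 1 / ((n : ℝ) + 1 + k) ^ p = (c + k) ^ (-p) := by
      intro k
      have hk : (0:ℝ) < c + k := by positivity
      rw [Real.rpow_neg hk.le, one_div]
    rw [tsum_congr e, Summable.tsum_eq_zero_add hsum]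
    push_cast
    rw [add_zero]
  rw [hsplit]
  -- final arithmetic
  have hrhs : 1 / (n : ℝ) ^ p * ((2 + 1 / n) / (1 + 1 / n) ^ p) = (2 + 1/(n:ℝ)) * c ^ (-p) := by
    rw [show (1:ℝ) + 1/n = c / n by field_simp; rw [hcdef],
      Real.div_rpow hc.le hn0.le, Real.rpow_neg hc.le]
    have h1 : (0:ℝ) < (n:ℝ) ^ p := Real.rpow_pos_of_pos hn0 _
    have h2 : (0:ℝ) < c ^ p := Real.rpow_pos_of_pos hc _
    field_simp
  rw [hrhs]
  have h2 : c^(-p+1) = c^(-p) * c := by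
    rw [← Real.rpow_add_one hc.ne' (-p)]
  have hcp : (0:ℝ) < c ^ (-p) := Real.rpow_pos_of_pos hc _
  have hpn : (n:ℝ) ≤ p - 1 := by linarith
  have hdiv : c^(-p)*c/(p-1) ≤ c^(-p)*c/n :=
    div_le_div_of_nonneg_left (by positivity) hn0 hpn
  have expand : (2 + 1/(n:ℝ)) * c^(-p) = c^(-p) + c^(-p)*c/n := by
    rw [hcdef]; field_simp; ring
  have := htail
  rw [h2] at this hI
  linarith
end

section
/- For every real $r$ and positive integer $n$ with $r \ge \frac{n+1}{2}$, one has $n^{2r} + 2\sum_{k=1}^{n-1} k^{2r} < n^{2r}\left(1 + 4\left(1 - \frac{1}{n}\right)^{2r}\right)$, provided $n \ge 2$. -/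
/-!
Write `N = n - 1` and `s = 2r`, so that `n ^ s (1 - 1/n) ^ s = N ^ s` and the claim becomes
`∑_{k=1}^{N} k ^ s < 2 N ^ s`. Comparing the increasing function `t ↦ t ^ s` with its integral,
`∑_{k<N} k ^ s ≤ ∫_0^N t ^ s dt = N ^ (s+1) / (s+1)`, which is `< N ^ s` as soon as `N < s + 1`;
adding the last term `N ^ s` gives the bound.
-/

open Real Finset

theorem sum_range_rpow_le_div {s : ℝ} (hs : 0 ≤ s) (N : ℕ) :
    ∑ k ∈ range N, (k : ℝ) ^ s ≤ (N : ℝ) ^ (s + 1) / (s + 1) := by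
  have hmono : MonotoneOn (fun t : ℝ => t ^ s) (Set.Icc 0 (0 + N)) :=
    fun x hx y _ hxy => rpow_le_rpow hx.1 hxy hs
  have := hmono.sum_le_integral
  simp only [zero_add] at this
  rwa [integral_rpow (Or.inl (by linarith)), zero_rpow (by linarith), sub_zero] at this

theorem sum_range_rpow_lt {s : ℝ} (hs : 0 ≤ s) {N : ℕ} (hN : 0 < N) (hNs : (N : ℝ) < s + 1) :
    ∑ k ∈ range N, (k : ℝ) ^ s < (N : ℝ) ^ s := by
  have hN' : (0 : ℝ) < N := by exact_mod_cast hN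
  calc ∑ k ∈ range N, (k : ℝ) ^ s
      ≤ (N : ℝ) ^ (s + 1) / (s + 1) := sum_range_rpow_le_div hs N
    _ = (N : ℝ) ^ s * N / (s + 1) := by rw [rpow_add_one hN'.ne']
    _ < (N : ℝ) ^ s := by
      rw [div_lt_iff₀ (by linarith)]
      exact mul_lt_mul_of_pos_left hNs (rpow_pos_of_pos hN' s)

theorem sum_Icc_one_rpow_lt_two_mul {s : ℝ} (hs : 0 ≤ s) {N : ℕ} (hN : 0 < N)
    (hNs : (N : ℝ) < s + 1) :
    ∑ k ∈ Icc 1 N, (k : ℝ) ^ s < 2 * (N : ℝ) ^ s := by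
  have hhead : ∑ k ∈ Ico 1 N, (k : ℝ) ^ s ≤ ∑ k ∈ range N, (k : ℝ) ^ s :=
    sum_le_sum_of_subset_of_nonneg (by rw [range_eq_Ico]; exact Ico_subset_Ico_left zero_le_one)
      fun k _ _ => rpow_nonneg k.cast_nonneg s
  rw [Icc_eq_cons_Ico hN, sum_cons]
  linarith [sum_range_rpow_lt hs hN hNs]

theorem head_power_sum_bound (r : ℝ) (n : ℕ) (hn : 2 ≤ n) (h : ((n : ℝ) + 1) / 2 ≤ r) :
    (n : ℝ) ^ (2 * r) + 2 * ∑ k ∈ Finset.Icc 1 (n - 1), (k : ℝ) ^ (2 * r) <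
      (n : ℝ) ^ (2 * r) * (1 + 4 * (1 - 1 / n) ^ (2 * r)) := by
  have hn' : (2 : ℝ) ≤ n := by exact_mod_cast hn
  have hcast : ((n - 1 : ℕ) : ℝ) = n - 1 := by push_cast [Nat.cast_sub (by omega : 1 ≤ n)]; ring
  have hscale : (n : ℝ) ^ (2 * r) * (1 - 1 / n) ^ (2 * r) = ((n - 1 : ℕ) : ℝ) ^ (2 * r) := by
    rw [← mul_rpow (by linarith) (by rw [sub_nonneg, div_le_one (by linarith)]; linarith), hcast]
    congr 1
    field_simp
  have hsum := sum_Icc_one_rpow_lt_two_mul (s := 2 * r) (N := n - 1) (by linarith) (by omega)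
    (by rw [hcast]; linarith)
  linarith
end

section
/- For all real $r > 1$, $\alpha > 0$, and every positive integer $n$, the following tail estimate holds: $\sum_{k=n+1}^{\infty} e^{-\alpha k^r} < e^{-\alpha n^r}\left(1 + \frac{1}{\alpha r n^{r-1}}\right) e^{-\alpha r n^{r-1}}$. -/
open Real

theorem poisson_tail_bound (r α : ℝ) (hr : 1 < r) (hα : 0 < α) (n : ℕ) (hn : 0 < n) :
    ∑' k : ℕ, Real.exp (-α * ((n : ℝ) + 1 + k) ^ r) <
      Real.exp (-α * (n : ℝ) ^ r) * (1 + 1 / (α * r * (n : ℝ) ^ (r - 1))) *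
        Real.exp (-α * r * (n : ℝ) ^ (r - 1)) := by
  have hn' : (0:ℝ) < n := by exact_mod_cast hn
  set β : ℝ := α * r * (n : ℝ) ^ (r - 1) with hβdef
  have hβ : 0 < β := by
    have := Real.rpow_pos_of_pos hn' (r - 1)
    positivity
  set q : ℝ := Real.exp (-β) with hqdef
  have hq0 : 0 < q := Real.exp_pos _
  have hq1 : q < 1 := by
    rw [hqdef, Real.exp_lt_one_iff]; linarith
  set A : ℝ := Real.exp (-α * (n : ℝ) ^ r) with hAdef
  have hA : 0 < A := Real.exp_pos _
  -- pointwise bound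
  have key : ∀ k : ℕ, Real.exp (-α * ((n : ℝ) + 1 + k) ^ r) ≤ A * q * q ^ k := by
    intro k
    have ht : (0:ℝ) ≤ (1 + k : ℝ) := by positivity
    have hx : ((n : ℝ) + 1 + k) = (n : ℝ) * (1 + (1 + k) / n) := by
      field_simp; ring
    have hb : 1 + r * ((1 + k) / n) ≤ (1 + (1 + k) / n) ^ r := by
      apply one_add_mul_self_le_rpow_one_add _ hr.le
      have : (0:ℝ) ≤ (1 + (k:ℝ)) / n := by positivity
      linarith
    have hrp : (n : ℝ) ^ r + r * (n : ℝ) ^ (r - 1) * (1 + k) ≤ ((n : ℝ) + 1 + k) ^ r := by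
      rw [hx, Real.mul_rpow hn'.le (by positivity)]
      have h1 : (n : ℝ) ^ r * (1 + r * ((1 + k) / n)) ≤ (n : ℝ) ^ r * (1 + (1 + k) / n) ^ r :=
        mul_le_mul_of_nonneg_left hb (Real.rpow_pos_of_pos hn' r).le
      have h2 : (n : ℝ) ^ r * (1 + r * ((1 + k) / n))
          = (n : ℝ) ^ r + r * (n : ℝ) ^ (r - 1) * (1 + k) := by
        have : (n : ℝ) ^ (r - 1) = (n : ℝ) ^ r / n := by
          rw [Real.rpow_sub hn', Real.rpow_one]
        rw [this]; field_simp
      linarith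
    have : -α * ((n : ℝ) + 1 + k) ^ r ≤ -α * (n : ℝ) ^ r + (-β + k * (-β)) := by
      have := mul_le_mul_of_nonneg_left hrp hα.le
      rw [hβdef]; nlinarith
    calc Real.exp (-α * ((n : ℝ) + 1 + k) ^ r)
        ≤ Real.exp (-α * (n : ℝ) ^ r + (-β + k * (-β))) := Real.exp_le_exp.2 this
      _ = A * q * q ^ k := by
          rw [Real.exp_add, Real.exp_add, hAdef, hqdef, ← Real.exp_nat_mul]
          ring
  have hsum : Summable (fun k : ℕ => A * q * q ^ k) :=
    (summable_geometric_of_lt_one hq0.le hq1).mul_left _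
  have hsum' : Summable (fun k : ℕ => Real.exp (-α * ((n : ℝ) + 1 + k) ^ r)) :=
    Summable.of_nonneg_of_le (fun k => (Real.exp_pos _).le) key hsum
  have hle : ∑' k : ℕ, Real.exp (-α * ((n : ℝ) + 1 + k) ^ r)
      ≤ A * q * (1 - q)⁻¹ := by
    calc ∑' k : ℕ, Real.exp (-α * ((n : ℝ) + 1 + k) ^ r)
        ≤ ∑' k : ℕ, A * q * q ^ k := Summable.tsum_le_tsum key hsum' hsum
      _ = A * q * (1 - q)⁻¹ := by
          rw [tsum_mul_left, tsum_geometric_of_lt_one hq0.le hq1]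
  have hfinal : A * q * (1 - q)⁻¹ < A * (1 + 1 / β) * q := by
    have h1q : 0 < 1 - q := by linarith
    have hexp : β + 1 < Real.exp β := Real.add_one_lt_exp hβ.ne'
    have hkey : q * (β + 1) < 1 := by
      have : q * (β + 1) < q * Real.exp β := by nlinarith
      calc q * (β + 1) < q * Real.exp β := this
        _ = 1 := by rw [hqdef, ← Real.exp_add]; simp
    have h2 : (1 - q)⁻¹ < 1 + 1 / β := by
      have h3 : (1:ℝ) / (1 - q) < (β + 1) / β := by
        rw [div_lt_div_iff₀ h1q hβ]; nlinarith [hkey]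
      have h4 : (β + 1) / β = 1 + 1 / β := by field_simp
      rw [h4] at h3; rw [one_div] at h3; exact h3
    calc A * q * (1 - q)⁻¹ < A * q * (1 + 1 / β) :=
          mul_lt_mul_of_pos_left h2 (mul_pos hA hq0)
      _ = A * (1 + 1 / β) * q := by ring
  calc ∑' k : ℕ, Real.exp (-α * ((n : ℝ) + 1 + k) ^ r) ≤ A * q * (1 - q)⁻¹ := hle
    _ < A * (1 + 1 / β) * q := hfinal
    _ = Real.exp (-α * (n : ℝ) ^ r) * (1 + 1 / (α * r * (n : ℝ) ^ (r - 1))) *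
          Real.exp (-α * r * (n : ℝ) ^ (r - 1)) := by
        rw [hqdef, hβdef, hAdef]; ring_nf
end

section
/- Let $\alpha > 0$, $r > 1$, and let $n \ge 2$ be an integer with $(n-1)^r > 1/\alpha$. Then $\int_1^{n-1} e^{2\alpha t^r}\,dt \le \frac{e^{2\alpha(n-1)^r}}{\alpha r (n-1)^{r-1}} + \max\left\{ e^{4\alpha},\; \frac{e^2}{\alpha^{1+1/r}} \right\}$. -/
open Real intervalIntegral MeasureTheory Set

lemma cont_exp_aux (α r a b : ℝ) (ha : 0 < a) :
    ContinuousOn (fun t : ℝ => Real.exp (2*α*t^r)) (Set.Icc a b) := by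
  apply ContinuousOn.rexp
  apply ContinuousOn.mul continuousOn_const
  apply ContinuousOn.rpow_const continuousOn_id
  intro x hx
  exact Or.inl (ha.trans_le hx.1).ne'

lemma intble_exp_aux (α r a b : ℝ) (ha : 0 < a) (hab : a ≤ b) :
    IntervalIntegrable (fun t : ℝ => Real.exp (2*α*t^r)) volume a b := by
  apply ContinuousOn.intervalIntegrable
  rw [Set.uIcc_of_le hab]
  exact cont_exp_aux α r a b ha

lemma head_bound (α r s : ℝ) (hα : 0 < α) (hr : 0 < r) (hs : 1 ≤ s) :
    ∫ t in (1:ℝ)..s, Real.exp (2*α*t^r) ≤ (s-1) * Real.exp (2*α*s^r) := by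
  have h1 : ∫ t in (1:ℝ)..s, Real.exp (2*α*t^r) ≤ ∫ t in (1:ℝ)..s, Real.exp (2*α*s^r) := by
    apply intervalIntegral.integral_mono_on hs (intble_exp_aux α r 1 s one_pos hs)
      intervalIntegrable_const
    intro t ht
    have h0 : (0:ℝ) ≤ t := le_trans zero_le_one ht.1
    have : t ^ r ≤ s ^ r := Real.rpow_le_rpow h0 ht.2 hr.le
    have := mul_le_mul_of_nonneg_left this (by positivity : (0:ℝ) ≤ 2*α)
    exact Real.exp_le_exp.mpr this
  calc _ ≤ _ := h1
    _ = (s-1) * Real.exp (2*α*s^r) := by rw [intervalIntegral.integral_const]; simp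

lemma tail_bound (α r s N : ℝ) (hα : 0 < α) (hr : 1 < r) (hs1 : 1 ≤ s) (hsN : s ≤ N)
    (hkey : r - 1 ≤ α * r * s ^ r) :
    ∫ t in s..N, Real.exp (2*α*t^r) ≤ Real.exp (2*α*N^r) / (α*r*N^(r-1)) := by
  have hr0 : 0 < r := lt_trans one_pos hr
  have hs0 : 0 < s := lt_of_lt_of_le one_pos hs1
  have hN0 : 0 < N := lt_of_lt_of_le hs0 hsN
  set F : ℝ → ℝ := fun t => t^(1-r) * Real.exp (2*α*t^r) / (2*α*r) with hF
  set g : ℝ → ℝ := fun t => Real.exp (2*α*t^r) * (1 - (r-1)/(2*α*r*t^r)) with hg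
  have hderiv : ∀ t ∈ Set.uIcc s N, HasDerivAt F (g t) t := by
    intro t ht
    rw [Set.uIcc_of_le hsN] at ht
    have ht0 : 0 < t := lt_of_lt_of_le hs0 ht.1
    have htr : (0:ℝ) < t ^ r := Real.rpow_pos_of_pos ht0 r
    have h1 : HasDerivAt (fun t : ℝ => t^(1-r)) ((1-r)*t^(1-r-1)) t :=
      Real.hasDerivAt_rpow_const (Or.inl ht0.ne')
    have h2 : HasDerivAt (fun t : ℝ => 2*α*t^r) (2*α*(r*t^(r-1))) t :=
      (Real.hasDerivAt_rpow_const (Or.inl ht0.ne')).const_mul (2*α)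
    have h3 := h2.exp
    have h4 := (h1.mul h3).div_const (2*α*r)
    refine h4.congr_deriv ?_
    have e1 : t^(1-r-1) = (t^r)⁻¹ := by
      rw [show (1:ℝ)-r-1 = -r by ring, Real.rpow_neg ht0.le]
    have e2 : t^(1-r) = t * (t^r)⁻¹ := by
      rw [show (1:ℝ)-r = 1 + (-r) by ring, Real.rpow_add ht0, Real.rpow_one,
        Real.rpow_neg ht0.le]
    have e3 : t^(r-1) = t^r * t⁻¹ := by
      rw [show r-1 = r + (-1) by ring, Real.rpow_add ht0, Real.rpow_neg_one]
    rw [hg]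
    simp only [e1, e2, e3]
    field_simp
    ring
  have hgc : ContinuousOn g (Set.Icc s N) := by
    have hc : ContinuousOn (fun t:ℝ => t^r) (Set.Icc s N) := by
      apply ContinuousOn.rpow_const continuousOn_id
      intro x hx; exact Or.inl (lt_of_lt_of_le hs0 hx.1).ne'
    apply ContinuousOn.mul (cont_exp_aux α r s N hs0)
    apply ContinuousOn.sub continuousOn_const
    apply ContinuousOn.div continuousOn_const (continuousOn_const.mul hc)
    intro x hx
    have : (0:ℝ) < x ^ r := Real.rpow_pos_of_pos (lt_of_lt_of_le hs0 hx.1) r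
    show 2*α*r*x^r ≠ 0
    positivity
  have hgint : IntervalIntegrable g volume s N := by
    apply ContinuousOn.intervalIntegrable
    rwa [Set.uIcc_of_le hsN]
  have hFTC : ∫ t in s..N, g t = F N - F s :=
    intervalIntegral.integral_eq_sub_of_hasDerivAt hderiv hgint
  have hmono : ∫ t in s..N, Real.exp (2*α*t^r) ≤ ∫ t in s..N, 2 * g t := by
    apply intervalIntegral.integral_mono_on hsN
    · apply ContinuousOn.intervalIntegrable
      rw [Set.uIcc_of_le hsN]; exact cont_exp_aux α r s N hs0
    · exact hgint.const_mul 2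
    · intro t ht
      have ht0 : 0 < t := lt_of_lt_of_le hs0 ht.1
      have htr : (0:ℝ) < t ^ r := Real.rpow_pos_of_pos ht0 r
      have hsr : s ^ r ≤ t ^ r := Real.rpow_le_rpow hs0.le ht.1 hr0.le
      have hcoef : (r-1)/(2*α*r*t^r) ≤ 1/2 := by
        rw [div_le_div_iff₀ (by positivity) (by norm_num)]
        nlinarith [mul_le_mul_of_nonneg_left hsr (by positivity : (0:ℝ) ≤ α*r)]
      have hE : (0:ℝ) < Real.exp (2*α*t^r) := Real.exp_pos _
      rw [hg]
      nlinarith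
  have h2g : ∫ t in s..N, 2 * g t = 2 * (F N - F s) := by
    rw [intervalIntegral.integral_const_mul, hFTC]
  have hFs : 0 ≤ F s := by
    rw [hF]
    have : (0:ℝ) < s ^ (1-r) := Real.rpow_pos_of_pos hs0 _
    positivity
  have hFN : 2 * F N = Real.exp (2*α*N^r) / (α*r*N^(r-1)) := by
    simp only [hF]
    have e : N^(1-r) = (N^(r-1))⁻¹ := by
      rw [show (1:ℝ)-r = -(r-1) by ring, Real.rpow_neg hN0.le]
    have hNr : (0:ℝ) < N ^ (r-1) := Real.rpow_pos_of_pos hN0 _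
    rw [e]
    field_simp
  calc ∫ t in s..N, Real.exp (2*α*t^r) ≤ 2 * (F N - F s) := by rw [← h2g]; exact hmono
    _ ≤ 2 * F N := by linarith
    _ = _ := hFN

theorem integral_exp_bound (α r : ℝ) (hα : 0 < α) (hr : 1 < r) (n : ℕ) (hn : 2 ≤ n)
    (h : 1 / α < ((n : ℝ) - 1) ^ r) :
    ∫ t in (1 : ℝ)..((n : ℝ) - 1), Real.exp (2 * α * t ^ r) ≤
      Real.exp (2 * α * ((n : ℝ) - 1) ^ r) / (α * r * ((n : ℝ) - 1) ^ (r - 1)) +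
        max (Real.exp (4 * α)) (Real.exp 2 / α ^ (1 + 1 / r)) := by
  have hr0 : 0 < r := lt_trans one_pos hr
  set N : ℝ := (n : ℝ) - 1 with hNdef
  have hN1 : 1 ≤ N := by
    have : (2:ℝ) ≤ (n:ℝ) := by exact_mod_cast hn
    simp only [hNdef]; linarith
  have hN0 : (0:ℝ) < N := lt_of_lt_of_le one_pos hN1
  have hRHS1 : (0:ℝ) < Real.exp (2 * α * N ^ r) / (α * r * N ^ (r - 1)) := by
    have : (0:ℝ) < N ^ (r-1) := Real.rpow_pos_of_pos hN0 _
    positivity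
  have hmax : (0:ℝ) ≤ max (Real.exp (4 * α)) (Real.exp 2 / α ^ (1 + 1 / r)) :=
    le_trans (Real.exp_pos _).le (le_max_left _ _)
  rcases eq_or_lt_of_le hN1 with hNeq | hNlt
  · rw [← hNeq, intervalIntegral.integral_same]
    positivity
  -- main split helper
  have main : ∀ s : ℝ, 1 ≤ s → s ≤ N → r - 1 ≤ α * r * s ^ r →
      (s-1) * Real.exp (2*α*s^r) ≤ max (Real.exp (4 * α)) (Real.exp 2 / α ^ (1 + 1 / r)) →
      ∫ t in (1 : ℝ)..N, Real.exp (2 * α * t ^ r) ≤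
        Real.exp (2 * α * N ^ r) / (α * r * N ^ (r - 1)) +
          max (Real.exp (4 * α)) (Real.exp 2 / α ^ (1 + 1 / r)) := by
    intro s hs1 hsN hkey hhead
    have hsplit : (∫ t in (1:ℝ)..s, Real.exp (2*α*t^r)) + ∫ t in s..N, Real.exp (2*α*t^r)
        = ∫ t in (1:ℝ)..N, Real.exp (2*α*t^r) :=
      intervalIntegral.integral_add_adjacent_intervals
        (intble_exp_aux α r 1 s one_pos hs1)
        (intble_exp_aux α r s N (lt_of_lt_of_le one_pos hs1) hsN)
    rw [← hsplit]
    have t1 := head_bound α r s hα hr0 hs1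
    have t2 := tail_bound α r s N hα hr hs1 hsN hkey
    linarith
  rcases le_or_gt (1/2 : ℝ) α with hα2 | hα2
  · -- case α ≥ 1/2, s = 2^(1/r)
    set s : ℝ := (2:ℝ) ^ (1/r) with hsdef
    have hsr : s ^ r = 2 := by
      rw [hsdef, ← Real.rpow_mul (by norm_num : (0:ℝ) ≤ 2), one_div,
        inv_mul_cancel₀ hr0.ne', Real.rpow_one]
    have hs0 : (0:ℝ) < s := Real.rpow_pos_of_pos two_pos _
    have hs1 : 1 ≤ s := by
      by_contra hc
      push_neg at hc
      have := Real.rpow_le_one hs0.le hc.le hr0.le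
      rw [hsr] at this; norm_num at this
    have hs2 : s ≤ 2 := by
      calc s = (2:ℝ)^(1/r) := hsdef
        _ ≤ (2:ℝ)^(1:ℝ) := Real.rpow_le_rpow_of_exponent_le one_le_two
            (by rw [div_le_one hr0]; linarith)
        _ = 2 := Real.rpow_one 2
    have hN2 : (2:ℝ) ≤ N := by
      have h3 : 3 ≤ n := by
        by_contra hc
        push_neg at hc
        interval_cases n
        · simp only [hNdef] at hNlt; norm_num at hNlt
      have : (3:ℝ) ≤ (n:ℝ) := by exact_mod_cast h3
      simp only [hNdef]; linarith
    apply main s hs1 (le_trans hs2 hN2)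
    · rw [hsr]; nlinarith
    · apply le_trans _ (le_max_left _ _)
      rw [hsr]
      have : (2:ℝ)*α*2 = 4*α := by ring
      rw [this]
      nlinarith [Real.exp_pos (4*α)]
  · -- case α < 1/2, s = α^(-(1/r))
    set s : ℝ := α ^ (-(1/r)) with hsdef
    have hsr : s ^ r = α⁻¹ := by
      rw [hsdef, ← Real.rpow_mul hα.le]
      rw [show -(1/r)*r = -1 by field_simp, Real.rpow_neg_one]
    have hs0 : (0:ℝ) < s := Real.rpow_pos_of_pos hα _
    have hαinv : (2:ℝ) < α⁻¹ := by
      rw [lt_inv_comm₀ two_pos hα] at *; linarith [hα2]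
    have hs1 : 1 ≤ s := by
      by_contra hc
      push_neg at hc
      have := Real.rpow_le_one hs0.le hc.le hr0.le
      rw [hsr] at this; linarith
    have hsN : s ≤ N := by
      by_contra hc
      push_neg at hc
      have := Real.rpow_le_rpow hN0.le hc.le hr0.le
      rw [hsr] at this
      rw [one_div] at h
      linarith
    apply main s hs1 hsN
    · rw [hsr]; field_simp; linarith
    · apply le_trans _ (le_max_right _ _)
      rw [hsr, show 2*α*α⁻¹ = 2 by field_simp]
      have hcmp : s ≤ α ^ (-(1+1/r)) := by
        rw [hsdef]
        apply Real.rpow_le_rpow_of_exponent_ge hα (by linarith)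
        have : 0 < 1/r := by positivity
        linarith
      have hrw : Real.exp 2 / α ^ (1 + 1/r) = α ^ (-(1+1/r)) * Real.exp 2 := by
        rw [Real.rpow_neg hα.le, div_eq_mul_inv]; ring
      rw [hrw]
      have hE : (0:ℝ) < Real.exp 2 := Real.exp_pos _
      nlinarith
end

section
/- Let $\alpha > 0$ and $r > 1$ and $n$ a positive integer. Then $e^{2\alpha n^r} \sum_{k=n+1}^{\infty} e^{-2\alpha k^r} < \left(1 + \frac{1}{2\alpha r n^{r-1}}\right) e^{-2\alpha r n^{r-1}}$. -/
open Real

theorem poisson_tail_ratio_bound (α r : ℝ) (hα : 0 < α) (hr : 1 < r) (n : ℕ) (hn : 0 < n) :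
    Real.exp (2 * α * (n : ℝ) ^ r) * ∑' k : ℕ, Real.exp (-2 * α * ((n : ℝ) + 1 + k) ^ r) <
      (1 + 1 / (2 * α * r * (n : ℝ) ^ (r - 1))) * Real.exp (-2 * α * r * (n : ℝ) ^ (r - 1)) := by
  set x : ℝ := (n : ℝ) with hx
  have hx0 : 0 < x := by rw [hx]; exact_mod_cast hn
  set c : ℝ := 2 * α * r * x ^ (r - 1) with hc
  have hc0 : 0 < c := by
    apply mul_pos (by positivity) (rpow_pos_of_pos hx0 _)
  have hq1 : exp (-c) < 1 := exp_lt_one_iff.mpr (by linarith)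
  have hq0 : 0 < exp (-c) := exp_pos _
  -- Bernoulli: (x + t)^r ≥ x^r + r x^(r-1) t for t ≥ 0
  have key : ∀ t : ℝ, 0 ≤ t → x ^ r + r * x ^ (r - 1) * t ≤ (x + t) ^ r := by
    intro t ht
    have h1 : x + t = x * (1 + t / x) := by field_simp
    have hb : 1 + r * (t / x) ≤ (1 + t / x) ^ r :=
      one_add_mul_self_le_rpow_one_add (by have := div_nonneg ht hx0.le; linarith) hr.le
    have h2 : (x + t) ^ r = x ^ r * (1 + t / x) ^ r := by
      rw [h1, mul_rpow hx0.le (by positivity)]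
    rw [h2]
    have h3 : x ^ r * (1 + r * (t / x)) ≤ x ^ r * (1 + t / x) ^ r :=
      mul_le_mul_of_nonneg_left hb (rpow_nonneg hx0.le r)
    refine le_trans (le_of_eq ?_) h3
    have h4 : x ^ (r - 1) = x ^ r / x := by
      rw [rpow_sub hx0, rpow_one]
    rw [h4]
    field_simp
  -- termwise bound
  have hterm : ∀ k : ℕ, exp (-2 * α * (x + 1 + k) ^ r) ≤
      exp (-2 * α * x ^ r) * exp (-c) ^ (k + 1) := by
    intro k
    rw [← exp_nat_mul, ← exp_add]
    apply exp_le_exp.mpr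
    have := key (1 + k) (by positivity)
    have hk : x + 1 + (k : ℝ) = x + (1 + k) := by ring
    rw [hk]
    push_cast
    nlinarith [mul_le_mul_of_nonneg_left this (by positivity : (0:ℝ) ≤ 2 * α)]
  have hsum : Summable (fun k : ℕ => exp (-2 * α * x ^ r) * exp (-c) ^ (k + 1)) := by
    apply Summable.mul_left
    exact ((summable_geometric_of_lt_one hq0.le hq1).mul_left _).congr
      (fun k => by rw [pow_succ]; ring)
  have hsum2 : Summable (fun k : ℕ => exp (-2 * α * (x + 1 + k) ^ r)) :=
    Summable.of_nonneg_of_le (fun k => (exp_pos _).le) hterm hsum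
  have htsum : ∑' k : ℕ, exp (-2 * α * (x + 1 + k) ^ r) ≤
      exp (-2 * α * x ^ r) * (exp (-c) / (1 - exp (-c))) := by
    calc ∑' k : ℕ, exp (-2 * α * (x + 1 + k) ^ r)
        ≤ ∑' k : ℕ, exp (-2 * α * x ^ r) * exp (-c) ^ (k + 1) :=
          Summable.tsum_le_tsum hterm hsum2 hsum
      _ = exp (-2 * α * x ^ r) * (exp (-c) / (1 - exp (-c))) := by
          rw [tsum_mul_left]
          congr 1
          rw [show (fun k : ℕ => exp (-c) ^ (k + 1)) = fun k : ℕ => exp (-c) * exp (-c) ^ k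
            from funext fun k => by rw [pow_succ]; ring]
          rw [tsum_mul_left, tsum_geometric_of_lt_one hq0.le hq1]
          field_simp
  have hstep : exp (2 * α * x ^ r) * ∑' k : ℕ, exp (-2 * α * (x + 1 + k) ^ r) ≤
      exp (-c) / (1 - exp (-c)) := by
    calc exp (2 * α * x ^ r) * ∑' k : ℕ, exp (-2 * α * (x + 1 + k) ^ r)
        ≤ exp (2 * α * x ^ r) * (exp (-2 * α * x ^ r) * (exp (-c) / (1 - exp (-c)))) :=
          mul_le_mul_of_nonneg_left htsum (exp_pos _).le
      _ = exp (-c) / (1 - exp (-c)) := by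
          rw [← mul_assoc, ← exp_add, show 2 * α * x ^ r + -2 * α * x ^ r = 0 by ring,
            exp_zero, one_mul]
  refine lt_of_le_of_lt hstep ?_
  -- final: e^{-c}/(1-e^{-c}) < (1 + 1/c) e^{-c}
  have hlt : exp (-c) * (c + 1) < 1 := by
    have h := add_one_lt_exp (ne_of_gt hc0)
    have h2 : exp (-c) * (c + 1) < exp (-c) * exp c :=
      mul_lt_mul_of_pos_left (by linarith) hq0
    rwa [← exp_add, neg_add_cancel, exp_zero] at h2
  have h1q : 0 < 1 - exp (-c) := by linarith
  have hcc : -2 * α * r * x ^ (r - 1) = -c := by rw [hc]; ring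
  rw [hcc, div_lt_iff₀ h1q]
  have hgoal : 1 < (1 + 1 / c) * (1 - exp (-c)) := by
    rw [show (1 + 1 / c) * (1 - exp (-c)) = ((c + 1) * (1 - exp (-c))) / c by
        field_simp, lt_div_iff₀ hc0, one_mul]
    nlinarith [hlt]
  nlinarith [mul_lt_mul_of_pos_right hgoal hq0]
end
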